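/- Let n ≥ 2, m ≥ 2, d ≥ 1. If {X_i} is a family of Hermitian d×d complex matrices indexed by i ∈ {1,…,m}^n with Σ_{i : i_x = a} X_i = 0 for all x ∈ {1,…,n} and a ∈ {1,…,m}, then there exist Hermitian d×d matrices Y_k, indexed by the multi-indices k ∈ {1,…,m}^n having at least two components strictly less than m, such that X_i = Σ_k v^{(k)}_i · Y_k for every i ∈ {1,…,m}^n. That is, the vectors v^{(k)} span the full solution space of the homogeneous system. -/

import Mathlib

open Matrix Finset
open scoped ComplexOrder

/-- The outcome labeled `m` in 1-based labels: the last element of `Fin m`. -/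
def lastIdx {m : ℕ} (hm : 0 < m) : Fin m := ⟨m - 1, by omega⟩

/-- The vector `v^(k)` with entries
`v^(k)_i = δ_{i,k} − Σ_x δ_{i,(m,…,m,k_x,m,…,m)} + (n−1)·δ_{i,(m,…,m)}`. -/
noncomputable def vvec {n m : ℕ} (hm : 0 < m) (k : Fin n → Fin m) :
    (Fin n → Fin m) → ℝ := fun i =>
  (if i = k then 1 else 0)
  - ∑ x : Fin n,
      (if i = Function.update (fun _ => lastIdx hm) x (k x) then 1 else 0)
  + ((n : ℝ) - 1) * (if i = (fun _ => lastIdx hm) then 1 else 0)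

namespace Stmt6Aux

variable {n m : ℕ}

/-- The multi-index with `b` in slot `x` and `m` (the last index) elsewhere. -/
def Evec (hm0 : 0 < m) (x : Fin n) (b : Fin m) : Fin n → Fin m :=
  Function.update (fun _ => lastIdx hm0) x b

/-- The number of "small" components of a multi-index. -/
def Scount (hm0 : 0 < m) (k : Fin n → Fin m) : ℕ :=
  (univ.filter (fun x => k x < lastIdx hm0)).card

lemma not_lt_last (hm0 : 0 < m) (b : Fin m) : ¬ b < lastIdx hm0 ↔ b = lastIdx hm0 := by
  have hb := b.isLt
  simp only [lastIdx, Fin.lt_def, Fin.ext_iff]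
  omega

lemma Scount_Evec_le (hm0 : 0 < m) (x : Fin n) (b : Fin m) :
    Scount hm0 (Evec hm0 x b) ≤ 1 := by
  have hsub : (univ.filter fun y => Evec hm0 x b y < lastIdx hm0) ⊆ {x} := by
    intro y hy
    rw [mem_filter] at hy
    rw [mem_singleton]
    by_contra h
    rw [Evec, Function.update_of_ne h] at hy
    exact lt_irrefl _ hy.2
  simpa [Scount] using Finset.card_le_card hsub

lemma Scount_const (hm0 : 0 < m) : Scount hm0 (fun _ : Fin n => lastIdx hm0) = 0 := by
  simp [Scount]

lemma Scount_zero (hm0 : 0 < m) {i : Fin n → Fin m} (h : Scount hm0 i = 0) :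
    i = fun _ => lastIdx hm0 := by
  funext y
  rw [Scount, Finset.card_eq_zero] at h
  have hy : y ∉ (univ.filter fun x => i x < lastIdx hm0) := by
    rw [h]; exact notMem_empty y
  rw [mem_filter] at hy
  push_neg at hy
  exact (not_lt_last hm0 _).mp (not_lt.mpr (hy (mem_univ y)))

lemma const_eq_Evec (hm0 : 0 < m) (x : Fin n) (b : Fin m) :
    ((fun _ => lastIdx hm0) = Evec hm0 x b) ↔ b = lastIdx hm0 := by
  constructor
  · intro h
    have h2 := congrFun h x
    rw [Evec, Function.update_self] at h2
    exact h2.symm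
  · intro h
    funext y
    by_cases hyx : y = x
    · subst hyx; rw [Evec, Function.update_self, h]
    · rw [Evec, Function.update_of_ne hyx]

variable {M : Type*} [AddCommGroup M] [Module ℝ M]

lemma key (hn : 2 ≤ n) (hm0 : 0 < m)
    (X : (Fin n → Fin m) → M)
    (hX : ∀ (x : Fin n) (a : Fin m),
      (∑ i : Fin n → Fin m, if i x = a then X i else 0) = 0)
    (i : Fin n → Fin m) :
    X i = ∑ k ∈ univ.filter (fun k : Fin n → Fin m => 2 ≤ Scount hm0 k),
      vvec hm0 k i • X k := by
  classical
  -- total sum of all X is zero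
  have hx0 : (0:ℕ) < n := by omega
  have htot : (∑ k : Fin n → Fin m, X k) = 0 := by
    calc (∑ k : Fin n → Fin m, X k)
        = ∑ k : Fin n → Fin m, ∑ a : Fin m, if k ⟨0, hx0⟩ = a then X k else 0 := by
          refine Finset.sum_congr rfl fun k _ => ?_
          rw [Finset.sum_ite_eq univ (k ⟨0, hx0⟩) (fun _ => X k)]
          simp
      _ = ∑ a : Fin m, ∑ k : Fin n → Fin m, if k ⟨0, hx0⟩ = a then X k else 0 :=
          Finset.sum_comm
      _ = 0 := by simp [hX]
  -- sum over small x-th coordinate is zero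
  have hsmall : ∀ x : Fin n,
      (∑ k : Fin n → Fin m, if k x < lastIdx hm0 then X k else 0) = 0 := by
    intro x
    have h2 : ∀ k : Fin n → Fin m, (if k x < lastIdx hm0 then X k else 0)
        = X k - (if k x = lastIdx hm0 then X k else 0) := by
      intro k
      by_cases h : k x = lastIdx hm0
      · rw [if_pos h, if_neg ((not_lt_last hm0 _).mpr h), sub_self]
      · have hlt : k x < lastIdx hm0 := by
          by_contra hc; exact h ((not_lt_last hm0 _).mp hc)
        rw [if_pos hlt, if_neg h, sub_zero]
    rw [Finset.sum_congr rfl fun k _ => h2 k, Finset.sum_sub_distrib, htot,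
      hX x (lastIdx hm0), sub_zero]
  -- weighted total: Σ (S k - 1) • X k = 0
  have hT : (∑ k : Fin n → Fin m, ((Scount hm0 k : ℝ) - 1) • X k) = 0 := by
    have h1 : ∀ k : Fin n → Fin m, ((Scount hm0 k : ℝ) - 1) • X k
        = (∑ x : Fin n, if k x < lastIdx hm0 then X k else 0) - X k := by
      intro k
      have hc : (Scount hm0 k : ℝ) = ∑ x : Fin n, if k x < lastIdx hm0 then (1:ℝ) else 0 := by
        rw [Scount, Finset.card_filter]
        push_cast
        rfl
      rw [sub_smul, one_smul, hc, Finset.sum_smul]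
      congr 1
      refine Finset.sum_congr rfl fun x _ => ?_
      split <;> simp
    rw [Finset.sum_congr rfl fun k _ => h1 k, Finset.sum_sub_distrib, htot, sub_zero,
      Finset.sum_comm]
    simp [hsmall]
  -- expand vvec
  have expand : ∀ k : Fin n → Fin m, vvec hm0 k i • X k
      = (if i = k then (1:ℝ) else 0) • X k
        - (∑ x : Fin n, if i = Evec hm0 x (k x) then X k else 0)
        + (((n:ℝ) - 1) * (if i = fun _ => lastIdx hm0 then 1 else 0)) • X k := by
    intro k
    simp only [vvec, Evec]
    rw [add_smul, sub_smul, Finset.sum_smul]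
    congr 2
    refine Finset.sum_congr rfl fun x _ => ?_
    split <;> simp [*]
  rw [Finset.sum_congr rfl fun k _ => expand k, Finset.sum_add_distrib,
    Finset.sum_sub_distrib]
  by_cases hI2 : 2 ≤ Scount hm0 i
  · -- Case A : i has at least two small components
    have h1 : (∑ k ∈ univ.filter (fun k => 2 ≤ Scount hm0 k),
        (if i = k then (1:ℝ) else 0) • X k) = X i := by
      rw [Finset.sum_eq_single i]
      · simp
      · intro k hk hne
        rw [if_neg (fun h => hne h.symm), zero_smul]
      · intro h
        exact absurd (Finset.mem_filter.mpr ⟨Finset.mem_univ i, hI2⟩) h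
    have h2 : (∑ k ∈ univ.filter (fun k => 2 ≤ Scount hm0 k),
        ∑ x : Fin n, if i = Evec hm0 x (k x) then X k else 0) = 0 := by
      refine Finset.sum_eq_zero fun k hk => Finset.sum_eq_zero fun x _ => ?_
      rw [if_neg]
      intro h
      have hle := Scount_Evec_le hm0 x (k x)
      rw [← h] at hle
      omega
    have hne : i ≠ fun _ => lastIdx hm0 := by
      intro h
      have h0 := Scount_const (n := n) hm0
      rw [← h] at h0
      omega
    have h3 : (∑ k ∈ univ.filter (fun k => 2 ≤ Scount hm0 k),
        (((n:ℝ) - 1) * (if i = fun _ => lastIdx hm0 then 1 else 0)) • X k) = 0 :=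
      Finset.sum_eq_zero fun k _ => by rw [if_neg hne, mul_zero, zero_smul]
    rw [h1, h2, h3, sub_zero, add_zero]
  · by_cases hI1 : Scount hm0 i = 1
    · -- Case B : i has exactly one small component
      rw [Scount] at hI1
      obtain ⟨x0, hx0s⟩ := Finset.card_eq_one.mp hI1
      have hx0mem : x0 ∈ univ.filter (fun x => i x < lastIdx hm0) := by
        rw [hx0s]; exact mem_singleton_self x0
      have hx0lt : i x0 < lastIdx hm0 := (mem_filter.mp hx0mem).2
      have hother : ∀ y : Fin n, y ≠ x0 → i y = lastIdx hm0 := by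
        intro y hy
        have hyn : y ∉ univ.filter (fun x => i x < lastIdx hm0) := by
          rw [hx0s, mem_singleton]; exact hy
        rw [mem_filter] at hyn
        push_neg at hyn
        exact (not_lt_last hm0 _).mp (not_lt.mpr (hyn (mem_univ y)))
      have hieq : Evec hm0 x0 (i x0) = i := by
        funext y
        by_cases hyx : y = x0
        · subst hyx; rw [Evec, Function.update_self]
        · rw [Evec, Function.update_of_ne hyx, hother y hyx]
      have h1 : (∑ k ∈ univ.filter (fun k => 2 ≤ Scount hm0 k),
          (if i = k then (1:ℝ) else 0) • X k) = 0 := by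
        refine Finset.sum_eq_zero fun k hk => ?_
        rw [mem_filter] at hk
        rw [if_neg, zero_smul]
        intro h
        rw [← h, Scount] at hk
        omega
      have hne : i ≠ fun _ => lastIdx hm0 := by
        intro h
        have h0 := Scount_const (n := n) hm0
        rw [← h, Scount] at h0
        omega
      have h3 : (∑ k ∈ univ.filter (fun k => 2 ≤ Scount hm0 k),
          (((n:ℝ) - 1) * (if i = fun _ => lastIdx hm0 then 1 else 0)) • X k) = 0 :=
        Finset.sum_eq_zero fun k _ => by rw [if_neg hne, mul_zero, zero_smul]
      have h2 : (∑ k ∈ univ.filter (fun k => 2 ≤ Scount hm0 k),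
          ∑ x : Fin n, if i = Evec hm0 x (k x) then X k else 0)
          = ∑ k ∈ univ.filter (fun k => 2 ≤ Scount hm0 k),
              if k x0 = i x0 then X k else 0 := by
        refine Finset.sum_congr rfl fun k hk => ?_
        have hiff : ∀ x : Fin n, (i = Evec hm0 x (k x)) ↔ (x = x0 ∧ k x0 = i x0) := by
          intro x
          constructor
          · intro h
            by_cases hxx : x = x0
            · subst hxx
              refine ⟨rfl, ?_⟩
              have h2 := congrFun h x
              rw [Evec, Function.update_self] at h2
              exact h2.symm
            · exfalso
              have h2 := congrFun h x0
              rw [Evec, Function.update_of_ne (Ne.symm hxx)] at h2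
              rw [h2] at hx0lt
              exact lt_irrefl _ hx0lt
          · rintro ⟨rfl, hk0⟩
            rw [hk0, hieq]
        calc (∑ x : Fin n, if i = Evec hm0 x (k x) then X k else 0)
            = ∑ x : Fin n, if (x = x0 ∧ k x0 = i x0) then X k else 0 :=
              Finset.sum_congr rfl fun x _ => if_congr (hiff x) rfl rfl
          _ = if k x0 = i x0 then X k else 0 := by
              by_cases hk0 : k x0 = i x0 <;> simp [hk0]
      have hbal : (∑ k ∈ univ.filter (fun k => 2 ≤ Scount hm0 k),
          if k x0 = i x0 then X k else 0) = - X i := by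
        have hfull := hX x0 (i x0)
        rw [← Finset.sum_filter_add_sum_filter_not univ (fun k => 2 ≤ Scount hm0 k)
          (fun k => if k x0 = i x0 then X k else 0)] at hfull
        have hnot : (∑ k ∈ univ.filter (fun k => ¬ 2 ≤ Scount hm0 k),
            if k x0 = i x0 then X k else 0) = X i := by
          rw [Finset.sum_eq_single i]
          · rw [if_pos rfl]
          · intro k hk hne2
            rw [mem_filter] at hk
            rw [if_neg]
            intro hk0
            apply hne2
            have hmem : x0 ∈ univ.filter (fun x => k x < lastIdx hm0) := by
              rw [mem_filter]
              exact ⟨mem_univ _, by rw [hk0]; exact hx0lt⟩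
            have hpos : 0 < Scount hm0 k := by
              rw [Scount]; exact Finset.card_pos.mpr ⟨x0, hmem⟩
            have hone : Scount hm0 k = 1 := by omega
            rw [Scount] at hone
            obtain ⟨a, ha⟩ := Finset.card_eq_one.mp hone
            have hax : a = x0 := by
              rw [ha, mem_singleton] at hmem; exact hmem.symm
            funext y
            by_cases hyx : y = x0
            · subst hyx; exact hk0
            · have hy : y ∉ univ.filter (fun x => k x < lastIdx hm0) := by
                rw [ha, hax, mem_singleton]; exact hyx
              rw [mem_filter] at hy
              push_neg at hy
              rw [(not_lt_last hm0 (k y)).mp (not_lt.mpr (hy (mem_univ y))), hother y hyx]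
          · intro hnotmem
            exfalso
            apply hnotmem
            rw [mem_filter]
            exact ⟨mem_univ _, by omega⟩
        rw [hnot] at hfull
        exact eq_neg_of_add_eq_zero_left hfull
      rw [h1, h2, h3, hbal, add_zero, zero_sub, neg_neg]
    · -- Case C : i is the all-last multi-index
      have hI0 : Scount hm0 i = 0 := by omega
      have hi : i = fun _ => lastIdx hm0 := Scount_zero hm0 hI0
      have h1 : (∑ k ∈ univ.filter (fun k => 2 ≤ Scount hm0 k),
          (if i = k then (1:ℝ) else 0) • X k) = 0 := by
        refine Finset.sum_eq_zero fun k hk => ?_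
        rw [mem_filter] at hk
        rw [if_neg, zero_smul]
        intro h
        rw [← h, hI0] at hk
        omega
      have h3 : (∑ k ∈ univ.filter (fun k => 2 ≤ Scount hm0 k),
          (((n:ℝ) - 1) * (if i = fun _ => lastIdx hm0 then 1 else 0)) • X k)
          = ∑ k ∈ univ.filter (fun k => 2 ≤ Scount hm0 k), ((n:ℝ) - 1) • X k := by
        refine Finset.sum_congr rfl fun k _ => ?_
        rw [if_pos hi, mul_one]
      have h2 : (∑ k ∈ univ.filter (fun k => 2 ≤ Scount hm0 k),
          ∑ x : Fin n, if i = Evec hm0 x (k x) then X k else 0)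
          = ∑ k ∈ univ.filter (fun k => 2 ≤ Scount hm0 k),
              ((n:ℝ) - (Scount hm0 k : ℝ)) • X k := by
        refine Finset.sum_congr rfl fun k hk => ?_
        have hiff : ∀ x : Fin n, (i = Evec hm0 x (k x)) ↔ k x = lastIdx hm0 := by
          intro x; rw [hi]; exact const_eq_Evec hm0 x (k x)
        calc (∑ x : Fin n, if i = Evec hm0 x (k x) then X k else 0)
            = ∑ x : Fin n, if k x = lastIdx hm0 then X k else 0 :=
              Finset.sum_congr rfl fun x _ => if_congr (hiff x) rfl rfl
          _ = (∑ x : Fin n, if k x = lastIdx hm0 then (1:ℝ) else 0) • X k := by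
              rw [Finset.sum_smul]
              refine Finset.sum_congr rfl fun x _ => ?_
              split <;> simp
          _ = ((n:ℝ) - (Scount hm0 k : ℝ)) • X k := by
              congr 1
              have hsplit : ∀ x : Fin n, (if k x = lastIdx hm0 then (1:ℝ) else 0)
                  = 1 - (if k x < lastIdx hm0 then (1:ℝ) else 0) := by
                intro x
                by_cases h : k x = lastIdx hm0
                · rw [if_pos h, if_neg ((not_lt_last hm0 _).mpr h), sub_zero]
                · have hlt : k x < lastIdx hm0 := by
                    by_contra hc; exact h ((not_lt_last hm0 _).mp hc)
                  rw [if_neg h, if_pos hlt, sub_self]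
              rw [Finset.sum_congr rfl fun x _ => hsplit x, Finset.sum_sub_distrib]
              have hcard : (∑ x : Fin n, if k x < lastIdx hm0 then (1:ℝ) else 0)
                  = (Scount hm0 k : ℝ) := by
                rw [Scount, Finset.card_filter]
                push_cast
                rfl
              rw [hcard]
              simp
      have hKsum : (∑ k ∈ univ.filter (fun k => 2 ≤ Scount hm0 k),
          ((Scount hm0 k : ℝ) - 1) • X k) = X i := by
        have hsplit := Finset.sum_filter_add_sum_filter_not univ
          (fun k : Fin n → Fin m => 2 ≤ Scount hm0 k)
          (fun k => ((Scount hm0 k : ℝ) - 1) • X k)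
        rw [hT] at hsplit
        have hnot : (∑ k ∈ univ.filter (fun k => ¬ 2 ≤ Scount hm0 k),
            ((Scount hm0 k : ℝ) - 1) • X k) = - X i := by
          refine Eq.trans (Finset.sum_eq_single (fun _ => lastIdx hm0) ?_ ?_) ?_
          · intro k hk hne2
            rw [mem_filter] at hk
            have h0 : Scount hm0 k ≠ 0 := fun h => hne2 (Scount_zero hm0 h)
            have hone : Scount hm0 k = 1 := by omega
            rw [hone]
            simp
          · intro h
            exfalso
            apply h
            rw [mem_filter]
            refine ⟨mem_univ _, ?_⟩
            rw [Scount_const hm0]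
            omega
          · rw [Scount_const hm0, ← hi]
            simp
        rw [hnot, add_neg_eq_zero] at hsplit
        exact hsplit
      rw [h1, h2, h3, zero_sub, neg_add_eq_sub, ← Finset.sum_sub_distrib, ← hKsum]
      refine Finset.sum_congr rfl fun k _ => ?_
      rw [← sub_smul]
      congr 1
      ring

end Stmt6Aux

/-- every Hermitian solution `X` of the homogeneous system
`Σ_{i : i_x = a} X_i = 0` is a combination `X_i = Σ_k v^(k)_i · Y_k` of the
vectors `v^(k)` with Hermitian matrix coefficients; i.e., the `v^(k)` span the full
solution space of the homogeneous system. -/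
theorem stmt6 (n m d : ℕ) (hn : 2 ≤ n) (hm : 2 ≤ m) (hd : 1 ≤ d)
    (X : (Fin n → Fin m) → Matrix (Fin d) (Fin d) ℂ)
    (hXherm : ∀ i, (X i).IsHermitian)
    (hX : ∀ (x : Fin n) (a : Fin m),
      (∑ i : Fin n → Fin m, if i x = a then X i else 0) = 0) :
    ∃ Y : {k : Fin n → Fin m //
        2 ≤ (univ.filter fun x => k x < lastIdx (show 0 < m by omega)).card} →
        Matrix (Fin d) (Fin d) ℂ,
      (∀ k, (Y k).IsHermitian) ∧
      ∀ i : Fin n → Fin m,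
        X i = ∑ k, vvec (show 0 < m by omega) k.val i • Y k := by
  refine ⟨fun k => X k.val, fun k => hXherm _, fun i => ?_⟩
  have key := Stmt6Aux.key (M := Matrix (Fin d) (Fin d) ℂ) hn (show 0 < m by omega) X hX i
  rw [key]
  apply Finset.sum_subtype
  intro k
  rw [Finset.mem_filter]
  exact ⟨fun h => h.2, fun h => ⟨Finset.mem_univ k, h⟩⟩
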